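/- The clause C = P(x,y) ∨ P(y,x) is not blocked by P(x,y) in F = { ¬P(u,v) ∨ ¬P(v,u) }: although both binary resolvents of C upon P(x,y) with the clause of F are valid, the P(x,y)-resolvent obtained by unifying P(x,y) simultaneously with P(u,v) and P(v,u) via the mgu {y ↦ x, u ↦ x, v ↦ x} is the clause P(x,x), which is not valid; moreover F is satisfiable while F ∪ {C} is unsatisfiable. -/

import Mathlib

/-- First-order terms over variables `V` and function symbols `Fn`. -/
inductive Term (V Fn : Type) : Type
  | var : V → Term V Fn
  | app : Fn → List (Term V Fn) → Term V Fn

/-- A substitution maps variables to terms. -/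
abbrev Subst (V Fn : Type) := V → Term V Fn

/-- Applying a substitution to a term. -/
def Term.subst {V Fn : Type} (σ : Subst V Fn) : Term V Fn → Term V Fn
  | .var v => σ v
  | .app f ts => .app f (ts.attach.map (fun t => Term.subst σ t.1))
  decreasing_by have := List.sizeOf_lt_of_mem t.2; simp at *; omega

/-- The set of variables occurring in a term. -/
def Term.vars {V Fn : Type} : Term V Fn → Set V
  | .var v => {v}
  | .app _ ts => {x | ∃ t ∈ ts.attach, x ∈ Term.vars t.1}
  decreasing_by have := List.sizeOf_lt_of_mem t.2; simp at *; omega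

/-- A term is ground if it contains no variables. -/
def Term.IsGround {V Fn : Type} (t : Term V Fn) : Prop := t.vars = ∅

/-- Composition of substitutions: `σ.comp γ` is "first σ, then γ". -/
def Subst.comp {V Fn : Type} (σ γ : Subst V Fn) : Subst V Fn :=
  fun v => (σ v).subst γ

/-- An atom: a predicate symbol applied to a list of argument terms. -/
structure Atom (V Fn P : Type) where
  pred : P
  args : List (Term V Fn)

/-- A literal: an atom with a polarity (`true` = positive). -/
structure Lit (V Fn P : Type) where
  pol : Bool
  atom : Atom V Fn P

/-- The complement of a literal. -/
def Lit.compl {V Fn P : Type} (l : Lit V Fn P) : Lit V Fn P := ⟨!l.pol, l.atom⟩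

def Atom.subst {V Fn P : Type} (σ : Subst V Fn) (A : Atom V Fn P) : Atom V Fn P :=
  ⟨A.pred, A.args.map (Term.subst σ)⟩

def Lit.subst {V Fn P : Type} (σ : Subst V Fn) (l : Lit V Fn P) : Lit V Fn P :=
  ⟨l.pol, l.atom.subst σ⟩

/-- A clause is a multiset (disjunction) of literals. -/
abbrev Clause (V Fn P : Type) := Multiset (Lit V Fn P)

def Clause.subst {V Fn P : Type} (σ : Subst V Fn) (C : Clause V Fn P) : Clause V Fn P :=
  C.map (Lit.subst σ)

def Atom.vars {V Fn P : Type} (A : Atom V Fn P) : Set V := {x | ∃ t ∈ A.args, x ∈ t.vars}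
def Lit.vars {V Fn P : Type} (l : Lit V Fn P) : Set V := l.atom.vars
def Clause.vars {V Fn P : Type} (C : Clause V Fn P) : Set V := {x | ∃ l ∈ C, x ∈ l.vars}

/-- A clause is ground if it contains no variables. -/
def Clause.IsGround {V Fn P : Type} (C : Clause V Fn P) : Prop := C.vars = ∅

/-- A substitution `σ` unifies a list of literals if it maps them all to the same literal. -/
def IsUnifier {V Fn P : Type} (σ : Subst V Fn) (ls : List (Lit V Fn P)) : Prop :=
  ∀ l₁ ∈ ls, ∀ l₂ ∈ ls, l₁.subst σ = l₂.subst σ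

/-- A most general unifier: every unifier factors through it. -/
def IsMGU {V Fn P : Type} (σ : Subst V Fn) (ls : List (Lit V Fn P)) : Prop :=
  IsUnifier σ ls ∧ ∀ τ, IsUnifier τ ls → ∃ γ, σ.comp γ = τ

/-- Validity of an equality-free clause: it contains a complementary pair of literals. -/
def Clause.ValidEF {V Fn P : Type} (C : Clause V Fn P) : Prop :=
  ∃ A : Atom V Fn P, (⟨true, A⟩ : Lit V Fn P) ∈ C ∧ (⟨false, A⟩ : Lit V Fn P) ∈ C

/-- `C` (written as `L ∨ C'`) is blocked by `L` in `F`: all `L`-resolvents with clauses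
of `F \ {L ∨ C'}` are valid. -/
def BlockedEF {V Fn P : Type} (L : Lit V Fn P) (C' : Clause V Fn P)
    (F : Set (Clause V Fn P)) : Prop :=
  ∀ D ∈ F, D ≠ L ::ₘ C' → ∀ Ns Drest : Clause V Fn P, Ns + Drest = D → Ns ≠ 0 →
    ∀ σ : Subst V Fn, IsMGU σ (L :: (Ns.map Lit.compl).toList) →
      Clause.ValidEF (C'.subst σ + Drest.subst σ)

/-- A propositional assignment on (ground) atoms. -/
abbrev PAssign (V Fn P : Type) := Atom V Fn P → Bool

def litTrue {V Fn P : Type} (α : PAssign V Fn P) (l : Lit V Fn P) : Prop :=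
  α l.atom = l.pol

/-- Propositional satisfaction of a (ground) clause. -/
def satC {V Fn P : Type} (α : PAssign V Fn P) (C : Clause V Fn P) : Prop :=
  ∃ l ∈ C, litTrue α l

/-- A first-order interpretation. -/
structure Interp (Fn P : Type) : Type 1 where
  dom : Type
  nonempty : Nonempty dom
  fn : Fn → List dom → dom
  pr : P → List dom → Prop

def Term.eval {V Fn P : Type} (I : Interp Fn P) (ρ : V → I.dom) : Term V Fn → I.dom
  | .var v => ρ v
  | .app f ts => I.fn f (ts.attach.map (fun t => Term.eval I ρ t.1))
  decreasing_by have := List.sizeOf_lt_of_mem t.2; simp at *; omega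

def litHolds {V Fn P : Type} (I : Interp Fn P) (ρ : V → I.dom) (l : Lit V Fn P) : Prop :=
  l.pol = true ↔ I.pr l.atom.pred (l.atom.args.map (Term.eval I ρ))

def clauseHolds {V Fn P : Type} (I : Interp Fn P) (ρ : V → I.dom) (C : Clause V Fn P) : Prop :=
  ∃ l ∈ C, litHolds I ρ l

/-- First-order satisfiability of a CNF formula (clauses implicitly universally quantified). -/
def SatEF {V Fn P : Type} (F : Set (Clause V Fn P)) : Prop :=
  ∃ I : Interp Fn P, ∀ C ∈ F, ∀ ρ : V → I.dom, clauseHolds I ρ C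


/-- The literal `(¬)P(s,t)` over a single binary predicate, variables `ℕ` (x = 0, y = 1,
u = 2, v = 3) and a single constant `c`. -/
def pL (pol : Bool) (s t : Term ℕ Unit) : Lit ℕ Unit Unit := ⟨pol, ⟨(), [s, t]⟩⟩

def vx : Term ℕ Unit := Term.var 0
def vy : Term ℕ Unit := Term.var 1
def vu : Term ℕ Unit := Term.var 2
def vv : Term ℕ Unit := Term.var 3

/-! Unifying `P(x,y)` with the complements of both literals of `¬P(u,v) ∨ ¬P(v,u)` at once
forces `x = y = u = v`, so the remaining literal `P(y,x)` of `C` becomes `P(x,x)` and nothing is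
left to clash with it. A binary resolvent instead keeps the other literal of `D`, which is exactly
the complement of the instance of `P(y,x)`. Under a constant assignment `_ ↦ e` both clauses of
`F ∪ {C}` speak about the single atom `P(e,e)`, positively in `C` and negatively in `D`. -/

section General

variable {V Fn P : Type}

@[simp] lemma Term.subst_var (σ : Subst V Fn) (n : V) : Term.subst σ (.var n) = σ n := by
  simp [Term.subst]

@[simp] lemma Term.eval_var (I : Interp Fn P) (ρ : V → I.dom) (n : V) :
    Term.eval I ρ (.var n) = ρ n := by
  simp [Term.eval]

@[simp] lemma Clause.subst_singleton (σ : Subst V Fn) (l : Lit V Fn P) :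
    Clause.subst σ {l} = {l.subst σ} :=
  Multiset.map_singleton _ _

lemma isUnifier_cons_iff {σ : Subst V Fn} {l : Lit V Fn P} {ls : List (Lit V Fn P)} :
    IsUnifier σ (l :: ls) ↔ ∀ l' ∈ ls, l.subst σ = l'.subst σ := by
  refine ⟨fun h l' hl' => h l (.head _) l' (.tail _ hl'), fun h l₁ hl₁ l₂ hl₂ => ?_⟩
  have key : ∀ m ∈ l :: ls, m.subst σ = l.subst σ := by
    rintro m (_ | ⟨_, hm⟩)
    exacts [rfl, (h m hm).symm]
  rw [key l₁ hl₁, key l₂ hl₂]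

lemma isUnifier_congr {σ : Subst V Fn} {ls ls' : List (Lit V Fn P)}
    (h : ∀ l, l ∈ ls ↔ l ∈ ls') : IsUnifier σ ls ↔ IsUnifier σ ls' := by
  simp only [IsUnifier, h]

lemma isMGU_congr {σ : Subst V Fn} {ls ls' : List (Lit V Fn P)}
    (h : ∀ l, l ∈ ls ↔ l ∈ ls') : IsMGU σ ls ↔ IsMGU σ ls' := by
  simp only [IsMGU, isUnifier_congr h]

lemma isMGU_of_comp_eq {σ : Subst V Fn} {ls : List (Lit V Fn P)} (hσ : IsUnifier σ ls)
    (h : ∀ τ, IsUnifier τ ls → σ.comp τ = τ) : IsMGU σ ls :=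
  ⟨hσ, fun τ hτ => ⟨τ, h τ hτ⟩⟩

lemma not_validEF_singleton (l : Lit V Fn P) : ¬ Clause.ValidEF ({l} : Clause V Fn P) := by
  rintro ⟨A, hpos, hneg⟩
  rw [Multiset.mem_singleton] at hpos hneg
  exact Bool.false_ne_true (congrArg Lit.pol (hneg.trans hpos.symm))

lemma not_blockedEF_of_resolvent {L : Lit V Fn P} {C' D : Clause V Fn P}
    {F : Set (Clause V Fn P)} {σ : Subst V Fn} (hD : D ∈ F) (hne : D ≠ L ::ₘ C') (hD₀ : D ≠ 0)
    (hσ : IsMGU σ (L :: (D.map Lit.compl).toList)) (hres : ¬ Clause.ValidEF (C'.subst σ)) :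
    ¬ BlockedEF L C' F := by
  intro hblocked
  have hvalid := hblocked D hD hne D 0 (add_zero D) hD₀ σ hσ
  exact hres (by simpa [Clause.subst] using hvalid)

lemma satEF_of_forall_exists_neg {F : Set (Clause V Fn P)}
    (h : ∀ C ∈ F, ∃ A, (⟨false, A⟩ : Lit V Fn P) ∈ C) : SatEF F := by
  refine ⟨⟨Unit, ⟨()⟩, fun _ _ => (), fun _ _ => False⟩, fun C hC ρ => ?_⟩
  obtain ⟨A, hA⟩ := h C hC
  exact ⟨_, hA, by simp [litHolds]⟩

end General

@[simp] lemma Lit.subst_pL (σ : Subst ℕ Unit) (p : Bool) (s t : Term ℕ Unit) :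
    Lit.subst σ (pL p s t) = pL p (s.subst σ) (t.subst σ) := by
  simp [Lit.subst, Atom.subst, pL]

@[simp] lemma pL_inj {p q : Bool} {s t s' t' : Term ℕ Unit} :
    pL p s t = pL q s' t' ↔ p = q ∧ s = s' ∧ t = t' := by
  simp [pL]

lemma validEF_pL_add_compl (s t : Term ℕ Unit) :
    Clause.ValidEF (({pL true s t} : Clause ℕ Unit Unit) + {pL false s t}) :=
  ⟨⟨(), [s, t]⟩, by simp [pL], by simp [pL]⟩

lemma isUnifier_pL_pair_iff {τ : Subst ℕ Unit} {p : Bool} {s t s' t' : Term ℕ Unit} :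
    IsUnifier τ [pL p s t, pL p s' t'] ↔ s.subst τ = s'.subst τ ∧ t.subst τ = t'.subst τ := by
  simp [isUnifier_cons_iff]

lemma isMGU_pL_rename {p : Bool} {a b c d : ℕ} (hab : a ≠ b) (hca : c ≠ a) (hcb : c ≠ b)
    (hda : d ≠ a) (hdb : d ≠ b) :
    IsMGU (fun n => if n = a then .var c else if n = b then .var d else .var n)
      [pL p (.var a) (.var b), pL p (.var c) (.var d)] := by
  refine isMGU_of_comp_eq ?_ fun τ hτ => ?_
  · simp [isUnifier_pL_pair_iff, hab.symm, hca, hcb, hda, hdb]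
  · obtain ⟨hac, hbd⟩ := isUnifier_pL_pair_iff.mp hτ
    simp only [Term.subst_var] at hac hbd
    funext n
    simp only [Subst.comp]
    split_ifs with hna hnb
    · simp [hna, hac]
    · simp [hnb, hbd]
    · simp

lemma isMGU_collapse :
    IsMGU (fun n => if n ≤ 3 then vx else .var n)
      [pL true vx vy, pL true vu vv, pL true vv vu] := by
  refine isMGU_of_comp_eq (by simp [isUnifier_cons_iff, vx, vy, vu, vv]) fun τ hτ => ?_
  simp only [isUnifier_cons_iff, List.mem_cons, List.not_mem_nil, or_false, forall_eq_or_imp,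
    forall_eq, Lit.subst_pL, pL_inj, vx, vy, vu, vv, Term.subst_var] at hτ
  obtain ⟨⟨-, h02, h13⟩, -, h03, h12⟩ := hτ
  funext n
  simp only [Subst.comp]
  split_ifs with hn
  · interval_cases n
    · simp [vx]
    · simp [vx, h03, h13]
    · simp [vx, h02]
    · simp [vx, h03]
  · simp

lemma litHolds_pL_var_const (I : Interp Unit Unit) (e : I.dom) (p : Bool) (m n : ℕ) :
    litHolds I (fun _ => e) (pL p (.var m) (.var n)) ↔ (p = true ↔ I.pr () [e, e]) := by
  simp [litHolds, pL]

lemma not_satEF_of_pos_of_neg {F : Set (Clause ℕ Unit Unit)} {C D : Clause ℕ Unit Unit}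
    (hC : C ∈ F) (hD : D ∈ F) (hCpos : ∀ l ∈ C, ∃ m n, l = pL true (.var m) (.var n))
    (hDneg : ∀ l ∈ D, ∃ m n, l = pL false (.var m) (.var n)) : ¬ SatEF F := by
  rintro ⟨I, hI⟩
  obtain ⟨e⟩ := I.nonempty
  obtain ⟨l, hl, hlC⟩ := hI C hC fun _ => e
  obtain ⟨l', hl', hlD⟩ := hI D hD fun _ => e
  obtain ⟨m, n, rfl⟩ := hCpos l hl
  obtain ⟨m', n', rfl⟩ := hDneg l' hl'
  rw [litHolds_pL_var_const] at hlC hlD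
  exact Bool.false_ne_true (hlD.mpr (hlC.mp rfl))

/-- `C = P(x,y) ∨ P(y,x)` is not blocked by `L = P(x,y)` in `F = {¬P(u,v) ∨ ¬P(v,u)}`:
both binary `L`-resolvents are valid, but the `L`-resolvent via the mgu
`{y ↦ x, u ↦ x, v ↦ x}` is `P(x,x)`, which is not valid; moreover `F` is satisfiable while
`F ∪ {C}` is unsatisfiable. -/
theorem stmt19 :
    let L : Lit ℕ Unit Unit := pL true vx vy
    let C' : Clause ℕ Unit Unit := {pL true vy vx}
    let D : Clause ℕ Unit Unit := {pL false vu vv, pL false vv vu}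
    let F : Set (Clause ℕ Unit Unit) := {D}
    let σ₁ : Subst ℕ Unit := fun n => if n = 0 then vu else if n = 1 then vv else Term.var n
    let σ₂ : Subst ℕ Unit := fun n => if n = 0 then vv else if n = 1 then vu else Term.var n
    let σ₃ : Subst ℕ Unit := fun n => if n ≤ 3 then vx else Term.var n
    -- both binary resolvents are valid
    (IsMGU σ₁ [L, (pL false vu vv).compl] ∧
      Clause.ValidEF (C'.subst σ₁ + Clause.subst σ₁ {pL false vv vu})) ∧
    (IsMGU σ₂ [L, (pL false vv vu).compl] ∧
      Clause.ValidEF (C'.subst σ₂ + Clause.subst σ₂ {pL false vu vv})) ∧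
    -- the simultaneous L-resolvent P(x,x) is not valid
    (IsMGU σ₃ [L, (pL false vu vv).compl, (pL false vv vu).compl] ∧
      ¬ Clause.ValidEF (C'.subst σ₃)) ∧
    -- hence C is not blocked by L in F
    ¬ BlockedEF L C' F ∧
    -- F is satisfiable while F ∪ {C} is unsatisfiable
    SatEF F ∧ ¬ SatEF (F ∪ {(L ::ₘ C' : Clause ℕ Unit Unit)}) := by
  intro L C' D F σ₁ σ₂ σ₃
  have hσ₃ : IsMGU σ₃ [L, (pL false vu vv).compl, (pL false vv vu).compl] := isMGU_collapse
  have hres₃ : ¬ Clause.ValidEF (C'.subst σ₃) := by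
    simpa [C', σ₃, vx, vy] using not_validEF_singleton (pL true vx vx)
  refine ⟨⟨isMGU_pL_rename (by simp) (by simp) (by simp) (by simp) (by simp), ?_⟩,
    ⟨isMGU_pL_rename (by simp) (by simp) (by simp) (by simp) (by simp), ?_⟩,
    ⟨hσ₃, hres₃⟩, ?_, ?_, ?_⟩
  · simpa [C', σ₁, vx, vy, vu, vv] using validEF_pL_add_compl vv vu
  · simpa [C', σ₂, vx, vy, vu, vv] using validEF_pL_add_compl vu vv
  · have hne : D ≠ L ::ₘ C' := fun h => by
      have hL : L ∈ D := h ▸ Multiset.mem_cons_self _ _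
      simp [D, L] at hL
    refine not_blockedEF_of_resolvent (D := D) rfl hne (by simp [D]) ?_ hres₃
    exact (isMGU_congr fun l => by simp [D]).mp hσ₃
  · exact satEF_of_forall_exists_neg fun C hC =>
      Set.mem_singleton_iff.mp hC ▸ ⟨_, Multiset.mem_cons_self _ _⟩
  · exact not_satEF_of_pos_of_neg (Or.inr rfl) (Or.inl rfl) (by simp [L, C', vx, vy])
      (by simp [D, vu, vv])
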